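/- Let σ be a locally finite Borel measure on ℝⁿ, 0 < r < 1, and let D be the dyadic cubes of positive σ-measure. For finitely supported nonnegative (λ_Q)_{Q∈D}, define a₁(Λ) = ∫ (Σ_{Q∈D} λ_Q χ_Q)^r dσ and a₃(Λ) = sup{ Σ_{R∈D} λ_R^r ν_R }, the supremum over all nonnegative sequences (ν_R) with ν_Q = 0 when σ(Q) = 0 and satisfying the Carleson condition Σ_{Q⊆P} (ν_Q/σ(Q))^{1/(1−r)} σ(Q) ≤ σ(P) for every P ∈ D. Then (1/C) a₃(Λ) ≤ a₁(Λ) ≤ C a₃(Λ) with C = C(r) > 0. -/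

import Mathlib

/-!
Write `Λ_R = Σ_{Q ⊇ R} λ_Q` for the sum of `λ` over the dyadic ancestors of `R`, and let the
stopping set `E_R` consist of the points whose finest cube in the support of `λ` is `R`. The sets
`E_R` are disjoint and cover the support of `Σ_Q λ_Q χ_Q`, which equals `Λ_R` on `E_R`; hence
`a₁ = Σ_R Λ_R ^ r σ(E_R)`.

Along the chain of ancestors of a cube, `Λ ^ r` telescopes, and by concavity each increment
`Λ_Q ^ r - (Λ_Q - λ_Q) ^ r` lies between `r λ_Q Λ_Q ^ (r - 1)` and `λ_Q Λ_Q ^ (r - 1)`. Covering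
each `Q` by the `E_R ⊆ Q` then gives `Σ_Q λ_Q Λ_Q ^ (r - 1) σ(Q) ≤ a₁ / r`. For a Carleson
sequence `ν`, Young's inequality splits `λ_Q ^ r ν_Q` into `λ_Q Λ_Q ^ (r - 1) σ(Q)` and
`(ν_Q / σ(Q)) ^ (1 / (1 - r)) σ(Q) Λ_Q ^ r`; telescoping `Λ_Q ^ r` and applying the Carleson
condition bounds the sum of the second terms by that of the first, so `a₃ ≤ (2 / r) a₁`.

Conversely, `ν_Q = λ_Q ^ (1 - r) Σ_{R ⊆ Q} Λ_R ^ (r - 1) σ(E_R)` pairs with `λ ^ r` to exactly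
`a₁`, and Hölder's inequality on the inner sum, with the disjointness of the `E_R`, makes it
Carleson.
-/

open MeasureTheory Set
open scoped ENNReal

/-- A dyadic cube in `ℝⁿ`, given by a generation `k : ℤ` and a corner index `m : Fin n → ℤ`. -/
structure DyadicCube (n : ℕ) where
  k : ℤ
  m : Fin n → ℤ

/-- The set of points of a dyadic cube: `∏ᵢ [mᵢ 2^{-k}, (mᵢ+1) 2^{-k})`. -/
def DyadicCube.toSet {n : ℕ} (Q : DyadicCube n) : Set (Fin n → ℝ) :=
  {x | ∀ i, (Q.m i : ℝ) * (2 : ℝ) ^ (-Q.k) ≤ x i ∧ x i < ((Q.m i : ℝ) + 1) * (2 : ℝ) ^ (-Q.k)}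

/-- `Σ_{Q} λ_Q χ_Q(x)`. -/
noncomputable def dSum {n : ℕ} (lam : DyadicCube n → ℝ≥0∞) (x : Fin n → ℝ) : ℝ≥0∞ :=
  ∑' Q : DyadicCube n, Set.indicator Q.toSet (fun _ => lam Q) x

/-- `Σ_{Q ⊆ R} λ_Q χ_Q(x)`. -/
noncomputable def dSumIn {n : ℕ} (lam : DyadicCube n → ℝ≥0∞) (R : DyadicCube n)
    (x : Fin n → ℝ) : ℝ≥0∞ :=
  ∑' Q : {Q : DyadicCube n // Q.toSet ⊆ R.toSet}, Set.indicator Q.1.toSet (fun _ => lam Q.1) x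

theorem Int.floor_mul_two_zpow_eq_div {k k' : ℤ} (hk : k ≤ k') (t : ℝ) :
    ⌊t * 2 ^ k⌋ = ⌊t * 2 ^ k'⌋ / (2 ^ (k' - k).toNat : ℕ) := by
  have h : t * 2 ^ k = t * 2 ^ k' / ((2 ^ (k' - k).toNat : ℕ) : ℝ) := by
    rw [Nat.cast_pow, Nat.cast_ofNat, ← zpow_natCast, Int.toNat_of_nonneg (by omega),
      mul_div_assoc, ← zpow_sub₀ two_ne_zero, sub_sub_cancel]
  rw [h, Int.floor_div_natCast]

theorem tsum_subtype_eq_tsum_ite {ι α : Type*} [AddCommMonoid α] [TopologicalSpace α]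
    (p : ι → Prop) [DecidablePred p] (f : ι → α) :
    ∑' i : {i // p i}, f i = ∑' i, if p i then f i else 0 := by
  rw [show ∑' i : {i // p i}, f i = ∑' i : ({i | p i} : Set ι), f i from rfl, tsum_subtype]
  simp only [Set.indicator_apply, Set.mem_ofPred_eq]

theorem tsum_ite_eq_sum_filter {ι α : Type*} [AddCommMonoid α] [TopologicalSpace α] {f : ι → α}
    (s : Finset ι) (hf : ∀ i ∉ s, f i = 0)
    (p : ι → Prop) [DecidablePred p] :
    ∑' i, (if p i then f i else 0) = ∑ i ∈ s with p i, f i := by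
  rw [Finset.sum_filter]
  exact tsum_eq_sum fun i hi => by simp [hf i hi]

theorem Finset.sum_tsub_of_isChain {ι : Type*} [PartialOrder ι] [DecidableEq ι] [DecidableLE ι]
    [DecidableLT ι] {s : Finset ι} (hs : IsChain (· ≤ ·) (s : Set ι)) (w : ι → ℝ≥0∞)
    {g : ℝ≥0∞ → ℝ≥0∞} (hg : Monotone g) :
    ∑ i ∈ s, (g (∑ j ∈ s with i ≤ j, w j) - g (∑ j ∈ s with i < j, w j)) =
      g (∑ j ∈ s, w j) - g 0 := by
  induction s using Finset.strongInduction with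
  | H s ih =>
  rcases s.eq_empty_or_nonempty with rfl | hne
  · simp
  obtain ⟨m, hm⟩ := s.exists_minimal hne
  have hmin : ∀ x ∈ s, m ≤ x := fun x hx => (hs.total hm.1 hx).elim id (hm.2 hx)
  have hfilter (i) (hi : i ∈ s.erase m) (rel : ι → ι → Prop) [DecidableRel rel]
      (hrel : ∀ j, rel i j → i ≤ j) : {j ∈ s | rel i j} = {j ∈ s.erase m | rel i j} := by
    ext j
    simp only [Finset.mem_filter, Finset.mem_erase, and_congr_left_iff, iff_and_self]
    rintro h - rfl
    exact (Finset.ne_of_mem_erase hi) (le_antisymm (hrel _ h) (hmin i (Finset.mem_of_mem_erase hi)))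
  have htop : {j ∈ s | m ≤ j} = s := Finset.filter_true_of_mem hmin
  have hnext : {j ∈ s | m < j} = s.erase m := by
    ext j
    simp only [Finset.mem_filter, Finset.mem_erase, lt_iff_le_and_ne]
    exact ⟨fun h => ⟨h.2.2.symm, h.1⟩, fun h => ⟨h.2, hmin j h.2, h.1.symm⟩⟩
  have hrest : ∑ i ∈ s.erase m, (g (∑ j ∈ s with i ≤ j, w j) - g (∑ j ∈ s with i < j, w j)) =
      g (∑ j ∈ s.erase m, w j) - g 0 := by
    rw [← ih _ (Finset.erase_ssubset hm.1)
      (hs.mono (Finset.coe_subset.2 (Finset.erase_subset _ _)))]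
    refine Finset.sum_congr rfl fun i hi => ?_
    rw [hfilter i hi (· ≤ ·) fun _ => id, hfilter i hi (· < ·) fun _ => le_of_lt]
  rw [← Finset.add_sum_erase s _ hm.1, htop, hnext, hrest]
  exact tsub_add_tsub_cancel (hg (Finset.sum_le_sum_of_subset (Finset.erase_subset _ _)))
    (hg zero_le)

theorem ENNReal.tsum_rpow_mul_rpow_le {ι : Type*} [Countable ι] {θ : ℝ} (hθ0 : 0 < θ)
    (hθ1 : θ < 1) (a b : ι → ℝ≥0∞) :
    ∑' i, a i ^ θ * b i ^ (1 - θ) ≤ (∑' i, a i) ^ θ * (∑' i, b i) ^ (1 - θ) := by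
  let _ : MeasurableSpace ι := ⊤
  have hpq : (1 / θ).HolderConjugate (1 / (1 - θ)) :=
    Real.holderConjugate_iff.2 ⟨by rw [lt_div_iff₀ hθ0]; linarith, by simp⟩
  have H := ENNReal.lintegral_mul_le_Lp_mul_Lq Measure.count hpq
    (measurable_of_countable fun i => a i ^ θ).aemeasurable
    (measurable_of_countable fun i => b i ^ (1 - θ)).aemeasurable
  simp only [lintegral_count, Pi.mul_apply, ← ENNReal.rpow_mul, one_div_one_div,
    mul_one_div_cancel hθ0.ne', mul_one_div_cancel (sub_pos.2 hθ1).ne', ENNReal.rpow_one] at H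
  exact H

theorem ENNReal.rpow_mul_rpow_le_add {θ : ℝ} (hθ0 : 0 ≤ θ) (hθ1 : θ ≤ 1) (x y : ℝ≥0∞) :
    x ^ θ * y ^ (1 - θ) ≤ x + y := by
  rcases eq_or_ne x ⊤ with rfl | hx
  · simp
  rcases eq_or_ne y ⊤ with rfl | hy
  · simp
  lift x to NNReal using hx
  lift y to NNReal using hy
  rw [← ENNReal.coe_rpow_of_nonneg _ hθ0, ← ENNReal.coe_rpow_of_nonneg _ (sub_nonneg.2 hθ1),
    ← ENNReal.coe_mul, ← ENNReal.coe_add, ENNReal.coe_le_coe, ← NNReal.coe_le_coe]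
  push_cast
  have := Real.geom_mean_le_arith_mean2_weighted hθ0 (sub_nonneg.2 hθ1) x.coe_nonneg
    y.coe_nonneg (by ring)
  nlinarith [x.coe_nonneg, y.coe_nonneg]

theorem Real.mul_rpow_sub_one_le_rpow {r A B : ℝ} (hr : r ≤ 1) (hB : 0 ≤ B) (hBA : B ≤ A) :
    B * A ^ (r - 1) ≤ B ^ r := by
  rcases hB.eq_or_lt with rfl | hB
  · simpa using Real.rpow_nonneg le_rfl r
  calc B * A ^ (r - 1) ≤ B * B ^ (r - 1) :=
        mul_le_mul_of_nonneg_left (Real.rpow_le_rpow_of_nonpos hB hBA (by linarith)) hB.le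
    _ = B ^ r := by rw [Real.rpow_sub_one hB.ne', mul_div_cancel₀ _ hB.ne']

theorem Real.add_rpow_sub_rpow_le {r B l : ℝ} (hr : r ≤ 1) (hB : 0 ≤ B) (hl : 0 ≤ l) :
    (B + l) ^ r - B ^ r ≤ l * (B + l) ^ (r - 1) := by
  rcases (add_nonneg hB hl).eq_or_lt with h | h
  · obtain ⟨rfl, rfl⟩ := (add_eq_zero_iff_of_nonneg hB hl).1 h.symm
    simp
  have hA : (B + l) ^ r = (B + l) * (B + l) ^ (r - 1) := by
    rw [Real.rpow_sub_one h.ne', mul_div_cancel₀ _ h.ne']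
  have := Real.mul_rpow_sub_one_le_rpow hr hB (le_add_of_nonneg_right hl)
  linarith

/-- Concavity of `t ↦ t ^ r`, through Bernoulli's inequality. -/
theorem Real.mul_mul_rpow_sub_one_le_add_rpow_sub_rpow {r B l : ℝ} (hr0 : 0 ≤ r) (hr1 : r ≤ 1)
    (hB : 0 ≤ B) (hl : 0 ≤ l) : r * (l * (B + l) ^ (r - 1)) ≤ (B + l) ^ r - B ^ r := by
  rcases (add_nonneg hB hl).eq_or_lt with h | h
  · obtain ⟨rfl, rfl⟩ := (add_eq_zero_iff_of_nonneg hB hl).1 h.symm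
    simp
  have hs : -1 ≤ -(l / (B + l)) := by
    rw [neg_le_neg_iff, div_le_one h]
    linarith
  have key := rpow_one_add_le_one_add_mul_self hs hr0 hr1
  rw [show 1 + -(l / (B + l)) = B / (B + l) by field_simp; ring, Real.div_rpow hB h.le,
    div_le_iff₀ (Real.rpow_pos_of_pos h r)] at key
  rw [Real.rpow_sub_one h.ne']
  have : r * (l * ((B + l) ^ r / (B + l))) = r * (l / (B + l)) * (B + l) ^ r := by ring
  nlinarith

theorem ENNReal.toReal_add_rpow_sub_rpow {r : ℝ} (hr : 0 ≤ r) {L l : ℝ≥0∞} (hL : L ≠ ⊤)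
    (hl : l ≠ ⊤) : ((L + l) ^ r - L ^ r).toReal = (L.toReal + l.toReal) ^ r - L.toReal ^ r := by
  rw [ENNReal.toReal_sub_of_le (ENNReal.rpow_le_rpow le_self_add hr)
    (ENNReal.rpow_ne_top_of_nonneg hr (ENNReal.add_ne_top.2 ⟨hL, hl⟩)), ← ENNReal.toReal_rpow,
    ← ENNReal.toReal_rpow, ENNReal.toReal_add hL hl]

theorem ENNReal.mul_add_rpow_sub_one_ne_top {r : ℝ} {L l : ℝ≥0∞} (hL : L ≠ ⊤) (hl : l ≠ ⊤)
    (h : L + l ≠ 0) : l * (L + l) ^ (r - 1) ≠ ⊤ :=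
  ENNReal.mul_ne_top hl (ENNReal.rpow_ne_top_of_ne_zero h (ENNReal.add_ne_top.2 ⟨hL, hl⟩))

theorem ENNReal.add_rpow_sub_rpow_le {r : ℝ} (hr0 : 0 ≤ r) (hr1 : r ≤ 1) {L l : ℝ≥0∞}
    (hL : L ≠ ⊤) (hl : l ≠ ⊤) : (L + l) ^ r - L ^ r ≤ l * (L + l) ^ (r - 1) := by
  rcases eq_or_ne (L + l) 0 with h | h
  · obtain ⟨rfl, rfl⟩ := add_eq_zero.1 h
    simp
  rw [← ENNReal.toReal_le_toReal (by finiteness) (mul_add_rpow_sub_one_ne_top hL hl h),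
    toReal_add_rpow_sub_rpow hr0 hL hl, ENNReal.toReal_mul, ← ENNReal.toReal_rpow,
    ENNReal.toReal_add hL hl]
  exact Real.add_rpow_sub_rpow_le hr1 ENNReal.toReal_nonneg ENNReal.toReal_nonneg

theorem ENNReal.ofReal_mul_le_add_rpow_sub_rpow {r : ℝ} (hr0 : 0 ≤ r) (hr1 : r ≤ 1)
    {L l : ℝ≥0∞} (hL : L ≠ ⊤) (hl : l ≠ ⊤) :
    ENNReal.ofReal r * (l * (L + l) ^ (r - 1)) ≤ (L + l) ^ r - L ^ r := by
  rcases eq_or_ne (L + l) 0 with h | h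
  · simp [(add_eq_zero.1 h).2]
  rw [← ENNReal.toReal_le_toReal (ENNReal.mul_ne_top ENNReal.ofReal_ne_top
      (mul_add_rpow_sub_one_ne_top hL hl h)) (by finiteness),
    toReal_add_rpow_sub_rpow hr0 hL hl, ENNReal.toReal_mul, ENNReal.toReal_mul,
    ENNReal.toReal_ofReal hr0, ← ENNReal.toReal_rpow, ENNReal.toReal_add hL hl]
  exact Real.mul_mul_rpow_sub_one_le_add_rpow_sub_rpow hr0 hr1 ENNReal.toReal_nonneg
    ENNReal.toReal_nonneg

/-- Young's inequality for the exponents `1 / r` and `1 / (1 - r)`, weighted by `Λ`. -/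
theorem ENNReal.rpow_mul_le_mul_rpow_add_rpow_mul {r : ℝ} (hr0 : 0 < r) (hr1 : r < 1)
    {Λ : ℝ≥0∞} (hΛ0 : Λ ≠ 0) (hΛ : Λ ≠ ⊤) (l t : ℝ≥0∞) :
    l ^ r * t ≤ l * Λ ^ (r - 1) + t ^ (1 / (1 - r)) * Λ ^ r := by
  have hr1' : 0 < 1 - r := sub_pos.2 hr1
  convert ENNReal.rpow_mul_rpow_le_add hr0.le hr1.le (l * Λ ^ (r - 1)) (t ^ (1 / (1 - r)) * Λ ^ r)
    using 1
  rw [ENNReal.mul_rpow_of_nonneg _ _ hr0.le, ENNReal.mul_rpow_of_nonneg _ _ hr1'.le,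
    ← ENNReal.rpow_mul, ← ENNReal.rpow_mul, ← ENNReal.rpow_mul, one_div_mul_cancel hr1'.ne',
    ENNReal.rpow_one, mul_mul_mul_comm, ← ENNReal.rpow_add _ _ hΛ0 hΛ,
    show (r - 1) * r + r * (1 - r) = 0 by ring, ENNReal.rpow_zero, mul_one]

namespace DyadicCube

variable {n : ℕ}

instance : Countable (DyadicCube n) :=
  Function.Injective.countable (f := fun Q : DyadicCube n => (Q.k, Q.m))
    fun ⟨_, _⟩ ⟨_, _⟩ h => by simpa using h

theorem mem_toSet_iff {Q : DyadicCube n} {x : Fin n → ℝ} :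
    x ∈ Q.toSet ↔ ∀ i, ⌊x i * 2 ^ Q.k⌋ = Q.m i := by
  have h2 : (0 : ℝ) < 2 ^ Q.k := zpow_pos two_pos _
  simp only [toSet, Set.mem_ofPred_eq, Int.floor_eq_iff, zpow_neg, mul_inv_le_iff₀ h2,
    lt_mul_inv_iff₀ h2]

theorem toSet_subset_of_mem {P Q : DyadicCube n} (hk : P.k ≤ Q.k) {x : Fin n → ℝ}
    (hP : x ∈ P.toSet) (hQ : x ∈ Q.toSet) : Q.toSet ⊆ P.toSet := by
  intro y hy
  rw [mem_toSet_iff] at hP hQ hy ⊢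
  intro i
  rw [← hP i, Int.floor_mul_two_zpow_eq_div hk, Int.floor_mul_two_zpow_eq_div hk, hy i,
    hQ i]

theorem eq_of_mem_of_k_eq {P Q : DyadicCube n} (hk : P.k = Q.k) {x : Fin n → ℝ}
    (hP : x ∈ P.toSet) (hQ : x ∈ Q.toSet) : P = Q := by
  rw [mem_toSet_iff] at hP hQ
  obtain ⟨k, m⟩ := P
  obtain ⟨k', m'⟩ := Q
  obtain rfl : k = k' := hk
  congr
  funext i
  exact (hP i).symm.trans (hQ i)

theorem toSet_nonempty (Q : DyadicCube n) : Q.toSet.Nonempty :=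
  ⟨fun i => Q.m i * 2 ^ (-Q.k), mem_toSet_iff.2 fun i => by
    rw [zpow_neg, inv_mul_cancel_right₀ (zpow_ne_zero _ two_ne_zero), Int.floor_intCast]⟩

theorem toSet_eq_pi (Q : DyadicCube n) :
    Q.toSet =
      Set.univ.pi fun i => Set.Ico ((Q.m i : ℝ) * 2 ^ (-Q.k)) ((Q.m i + 1) * 2 ^ (-Q.k)) := by
  ext x
  simp [toSet]

theorem measurableSet_toSet (Q : DyadicCube n) : MeasurableSet Q.toSet := by
  rw [toSet_eq_pi]
  exact .univ_pi fun _ => measurableSet_Ico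

theorem measure_toSet_ne_top (σ : Measure (Fin n → ℝ)) [IsLocallyFiniteMeasure σ]
    (Q : DyadicCube n) : σ Q.toSet ≠ ⊤ := by
  rw [toSet_eq_pi]
  exact ne_top_of_le_ne_top (isCompact_univ_pi fun i => isCompact_Icc).measure_ne_top
    (measure_mono (Set.pi_mono fun _ _ => Set.Ico_subset_Icc_self))

/-- Comparing generations as well as sets makes antisymmetry immediate. -/
instance : PartialOrder (DyadicCube n) where
  le R Q := R.toSet ⊆ Q.toSet ∧ Q.k ≤ R.k
  le_refl _ := ⟨subset_rfl, le_rfl⟩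
  le_trans _ _ _ h₁ h₂ := ⟨h₁.1.trans h₂.1, h₂.2.trans h₁.2⟩
  le_antisymm R _ h₁ h₂ := by
    obtain ⟨x, hx⟩ := R.toSet_nonempty
    exact eq_of_mem_of_k_eq (le_antisymm h₂.2 h₁.2) hx (h₁.1 hx)

theorem toSet_mono {R Q : DyadicCube n} (h : R ≤ Q) : R.toSet ⊆ Q.toSet := h.1

theorem le_of_mem {P Q : DyadicCube n} (hk : P.k ≤ Q.k) {x : Fin n → ℝ}
    (hP : x ∈ P.toSet) (hQ : x ∈ Q.toSet) : Q ≤ P :=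
  ⟨toSet_subset_of_mem hk hP hQ, hk⟩

theorem le_total_of_le {R P Q : DyadicCube n} (hP : R ≤ P) (hQ : R ≤ Q) : P ≤ Q ∨ Q ≤ P := by
  obtain ⟨x, hx⟩ := R.toSet_nonempty
  rcases le_total P.k Q.k with hk | hk
  · exact .inr (le_of_mem hk (hP.1 hx) (hQ.1 hx))
  · exact .inl (le_of_mem hk (hQ.1 hx) (hP.1 hx))

open scoped Classical

variable {lam : DyadicCube n → ℝ≥0∞}

variable (lam) in
noncomputable def ancestorSum (R : DyadicCube n) : ℝ≥0∞ :=
  ∑' Q, if R ≤ Q then lam Q else 0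

variable (lam) in
noncomputable def strictAncestorSum (R : DyadicCube n) : ℝ≥0∞ :=
  ∑' Q, if R < Q then lam Q else 0

theorem strictAncestorSum_add (R : DyadicCube n) :
    strictAncestorSum lam R + lam R = ancestorSum lam R := by
  rw [ancestorSum, ENNReal.tsum_eq_add_tsum_ite R, if_pos le_rfl, add_comm, strictAncestorSum]
  congr 1
  refine tsum_congr fun Q => ?_
  by_cases hQ : Q = R
  · simp [hQ]
  · have hRQ : R ≠ Q := fun h => hQ h.symm
    simp only [hQ, if_false, lt_iff_le_and_ne, hRQ, ne_eq, not_false_eq_true, and_true]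

theorem le_ancestorSum (R : DyadicCube n) : lam R ≤ ancestorSum lam R :=
  strictAncestorSum_add R ▸ le_add_self

theorem tsum_ite_eq_sum_support (hfin : (Function.support lam).Finite) (p : DyadicCube n → Prop)
    [DecidablePred p] :
    ∑' Q, (if p Q then lam Q else 0) = ∑ Q ∈ hfin.toFinset with p Q, lam Q :=
  tsum_ite_eq_sum_filter _ (fun Q hQ => by simpa using hQ) p

theorem ancestorSum_ne_top (hfin : (Function.support lam).Finite) (htop : ∀ Q, lam Q ≠ ⊤)
    (R : DyadicCube n) : ancestorSum lam R ≠ ⊤ := by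
  rw [ancestorSum, tsum_ite_eq_sum_support hfin]
  exact ENNReal.sum_ne_top.2 fun Q _ => htop Q

theorem strictAncestorSum_ne_top (hfin : (Function.support lam).Finite)
    (htop : ∀ Q, lam Q ≠ ⊤) (R : DyadicCube n) : strictAncestorSum lam R ≠ ⊤ :=
  (ENNReal.add_ne_top.1 (strictAncestorSum_add R ▸ ancestorSum_ne_top hfin htop R)).1

/-- The ancestors of `R` in the support of `lam` form a finite chain, along which
`ancestorSum lam R ^ r` telescopes. -/
theorem rpow_ancestorSum_eq_tsum {r : ℝ} (hr : 0 < r) (hfin : (Function.support lam).Finite)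
    (R : DyadicCube n) :
    ancestorSum lam R ^ r =
      ∑' Q, if R ≤ Q then ancestorSum lam Q ^ r - strictAncestorSum lam Q ^ r else 0 := by
  set F := {Q ∈ hfin.toFinset | R ≤ Q}
  have hchain : IsChain (· ≤ ·) (F : Set (DyadicCube n)) := fun P hP Q hQ _ =>
    le_total_of_le (Finset.mem_filter.1 hP).2 (Finset.mem_filter.1 hQ).2
  have hrestrict (Q) (hQ : Q ∈ F) (rel : DyadicCube n → DyadicCube n → Prop) [DecidableRel rel]
      (hrel : ∀ P, rel Q P → Q ≤ P) :
      ∑' P, (if rel Q P then lam P else 0) = ∑ P ∈ F with rel Q P, lam P := by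
    rw [tsum_ite_eq_sum_support hfin, Finset.filter_filter]
    refine Finset.sum_congr (Finset.filter_congr fun P _ => ?_) fun _ _ => rfl
    exact ⟨fun h => ⟨(Finset.mem_filter.1 hQ).2.trans (hrel P h), h⟩, And.right⟩
  rw [tsum_ite_eq_sum_filter hfin.toFinset (fun Q hQ => by
      rw [← strictAncestorSum_add, show lam Q = 0 by simpa using hQ, add_zero, tsub_self]),
    Finset.sum_congr rfl fun Q hQ => by
      rw [ancestorSum, strictAncestorSum, hrestrict Q hQ (· ≤ ·) fun _ => id,
        hrestrict Q hQ (· < ·) fun _ => le_of_lt],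
    Finset.sum_tsub_of_isChain hchain lam (ENNReal.monotone_rpow_of_nonneg hr.le),
    ENNReal.zero_rpow_of_pos hr, tsub_zero, ancestorSum, tsum_ite_eq_sum_support hfin]

theorem tsum_mul_rpow_ancestorSum_le {r : ℝ} (hr0 : 0 < r) (hr1 : r < 1)
    (hfin : (Function.support lam).Finite) (htop : ∀ Q, lam Q ≠ ⊤) (R : DyadicCube n) :
    ∑' Q, (if R ≤ Q then lam Q * ancestorSum lam Q ^ (r - 1) else 0) ≤
      (ENNReal.ofReal r)⁻¹ * ancestorSum lam R ^ r := by
  rw [rpow_ancestorSum_eq_tsum hr0 hfin, ← ENNReal.tsum_mul_left]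
  refine ENNReal.tsum_le_tsum fun Q => ?_
  split_ifs
  · rw [← ENNReal.mul_le_iff_le_inv (by simpa using hr0) ENNReal.ofReal_ne_top,
      ← strictAncestorSum_add]
    exact ENNReal.ofReal_mul_le_add_rpow_sub_rpow hr0.le hr1.le
      (strictAncestorSum_ne_top hfin htop Q) (htop Q)
  · simp

variable (lam) in
def stoppingSet (R : DyadicCube n) : Set (Fin n → ℝ) :=
  {x | lam R ≠ 0 ∧ x ∈ R.toSet ∧ ∀ Q, lam Q ≠ 0 → x ∈ Q.toSet → Q.k ≤ R.k}

theorem stoppingSet_subset (R : DyadicCube n) : stoppingSet lam R ⊆ R.toSet :=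
  fun _ hx => hx.2.1

theorem measurableSet_stoppingSet (R : DyadicCube n) : MeasurableSet (stoppingSet lam R) := by
  have hQ (Q : DyadicCube n) :
      MeasurableSet {x : Fin n → ℝ | lam Q ≠ 0 → x ∈ Q.toSet → Q.k ≤ R.k} := by
    by_cases h : lam Q ≠ 0 ∧ ¬Q.k ≤ R.k
    · convert (measurableSet_toSet Q).compl using 1
      ext x
      simp [h]
    · convert MeasurableSet.univ using 1
      ext x
      simp only [Set.mem_ofPred_eq, Set.mem_univ, iff_true]
      tauto
  have h : stoppingSet lam R = {_x | lam R ≠ 0} ∩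
      (R.toSet ∩ ⋂ Q, {x | lam Q ≠ 0 → x ∈ Q.toSet → Q.k ≤ R.k}) := by
    ext x
    simp [stoppingSet]
  rw [h]
  exact (MeasurableSet.const _).inter ((measurableSet_toSet R).inter (.iInter hQ))

theorem le_of_mem_stoppingSet {R Q : DyadicCube n} {x : Fin n → ℝ} (hx : x ∈ stoppingSet lam R)
    (hQ : lam Q ≠ 0) (hxQ : x ∈ Q.toSet) : R ≤ Q :=
  le_of_mem (hx.2.2 Q hQ hxQ) hxQ hx.2.1

theorem pairwise_disjoint_stoppingSet : Pairwise (Function.onFun Disjoint (stoppingSet lam)) :=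
  fun R R' hne => Set.disjoint_left.2 fun _ hx hx' => hne <|
    eq_of_mem_of_k_eq (le_antisymm (hx'.2.2 R hx.1 hx.2.1) (hx.2.2 R' hx'.1 hx'.2.1)) hx.2.1 hx'.2.1

theorem exists_mem_stoppingSet (hfin : (Function.support lam).Finite) {Q : DyadicCube n}
    {x : Fin n → ℝ} (hQ : lam Q ≠ 0) (hx : x ∈ Q.toSet) : ∃ R, x ∈ stoppingSet lam R := by
  obtain ⟨R, hR, hmax⟩ := Finset.exists_max_image {P ∈ hfin.toFinset | x ∈ P.toSet} (·.k)
    ⟨Q, by simp [hQ, hx]⟩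
  simp only [Finset.mem_filter, Set.Finite.mem_toFinset, Function.mem_support] at hR hmax
  exact ⟨R, hR.1, hR.2, fun P hP hxP => hmax P ⟨hP, hxP⟩⟩

theorem tsum_measure_stoppingSet_le (σ : Measure (Fin n → ℝ)) (p : DyadicCube n → Prop)
    {S : Set (Fin n → ℝ)} (hp : ∀ R, p R → R.toSet ⊆ S) :
    ∑' R, (if p R then σ (stoppingSet lam R) else 0) ≤ σ S := by
  set E := fun R => if p R then stoppingSet lam R else ∅
  have hE (R) : E R ⊆ stoppingSet lam R := by
    simp only [E]
    split_ifs <;> simp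
  calc ∑' R, (if p R then σ (stoppingSet lam R) else 0) = ∑' R, σ (E R) :=
        tsum_congr fun R => by simp only [E]; split_ifs <;> simp
    _ ≤ σ (⋃ R, E R) := tsum_meas_le_meas_iUnion_of_disjoint σ
        (fun R => by simp only [E]; split_ifs <;> simp [measurableSet_stoppingSet])
        fun R R' h => (pairwise_disjoint_stoppingSet h).mono (hE R) (hE R')
    _ ≤ σ S := measure_mono <| Set.iUnion_subset fun R => by
        simp only [E]
        split_ifs with h
        exacts [(stoppingSet_subset R).trans (hp R h), Set.empty_subset _]

theorem measure_le_tsum_measure_stoppingSet (hfin : (Function.support lam).Finite)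
    (σ : Measure (Fin n → ℝ)) {Q : DyadicCube n} (hQ : lam Q ≠ 0) :
    σ Q.toSet ≤ ∑' R, if R ≤ Q then σ (stoppingSet lam R) else 0 := by
  have hcover : Q.toSet ⊆ ⋃ R, if R ≤ Q then stoppingSet lam R else ∅ := fun x hx => by
    obtain ⟨R, hR⟩ := exists_mem_stoppingSet hfin hQ hx
    exact Set.mem_iUnion.2 ⟨R, by rwa [if_pos (le_of_mem_stoppingSet hR hQ hx)]⟩
  refine (measure_mono hcover).trans ((measure_iUnion_le _).trans_eq (tsum_congr fun R => ?_))
  split_ifs <;> simp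

theorem dSum_eq_ancestorSum {R : DyadicCube n} {x : Fin n → ℝ} (hx : x ∈ stoppingSet lam R) :
    dSum lam x = ancestorSum lam R := by
  refine tsum_congr fun Q => ?_
  by_cases h0 : lam Q = 0
  · simp [h0]
  by_cases hxQ : x ∈ Q.toSet
  · rw [Set.indicator_of_mem hxQ, if_pos (le_of_mem_stoppingSet hx h0 hxQ)]
  · rw [Set.indicator_of_notMem hxQ, if_neg fun h => hxQ (toSet_mono h (stoppingSet_subset R hx))]

theorem dSum_eq_zero (hfin : (Function.support lam).Finite) {x : Fin n → ℝ}
    (hx : ∀ R, x ∉ stoppingSet lam R) : dSum lam x = 0 :=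
  ENNReal.tsum_eq_zero.2 fun Q => Set.indicator_apply_eq_zero.2 fun hxQ => by
    by_contra h0
    exact (exists_mem_stoppingSet hfin h0 hxQ).elim hx

theorem rpow_dSum_eq_tsum_indicator {r : ℝ} (hr : 0 < r) (hfin : (Function.support lam).Finite)
    (x : Fin n → ℝ) :
    dSum lam x ^ r = ∑' R, (stoppingSet lam R).indicator (fun _ => ancestorSum lam R ^ r) x := by
  by_cases hx : ∃ R, x ∈ stoppingSet lam R
  · obtain ⟨R, hR⟩ := hx
    rw [tsum_eq_single R fun R' hne => Set.indicator_of_notMem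
        (Set.disjoint_left.1 (pairwise_disjoint_stoppingSet hne.symm) hR) _,
      Set.indicator_of_mem hR, dSum_eq_ancestorSum hR]
  · rw [not_exists] at hx
    simp [dSum_eq_zero hfin hx, ENNReal.zero_rpow_of_pos hr, hx]

theorem lintegral_rpow_dSum {r : ℝ} (hr : 0 < r) (hfin : (Function.support lam).Finite)
    (σ : Measure (Fin n → ℝ)) :
    ∫⁻ x, dSum lam x ^ r ∂σ = ∑' R, ancestorSum lam R ^ r * σ (stoppingSet lam R) := by
  simp_rw [rpow_dSum_eq_tsum_indicator hr hfin]
  rw [lintegral_tsum fun R =>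
    (measurable_const.indicator (measurableSet_stoppingSet R)).aemeasurable]
  exact tsum_congr fun R => lintegral_indicator_const (measurableSet_stoppingSet R) _

theorem tsum_mul_rpow_ancestorSum_mul_measure_le {r : ℝ} (hr0 : 0 < r) (hr1 : r < 1)
    (hfin : (Function.support lam).Finite) (htop : ∀ Q, lam Q ≠ ⊤) (σ : Measure (Fin n → ℝ)) :
    ∑' Q, lam Q * ancestorSum lam Q ^ (r - 1) * σ Q.toSet ≤
      (ENNReal.ofReal r)⁻¹ * ∑' R, ancestorSum lam R ^ r * σ (stoppingSet lam R) := by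
  calc ∑' Q, lam Q * ancestorSum lam Q ^ (r - 1) * σ Q.toSet
      ≤ ∑' Q, ∑' R, if R ≤ Q then
          lam Q * ancestorSum lam Q ^ (r - 1) * σ (stoppingSet lam R) else 0 := by
        refine ENNReal.tsum_le_tsum fun Q => ?_
        rcases eq_or_ne (lam Q) 0 with h0 | h0
        · simp [h0]
        simp_rw [← mul_ite_zero, ENNReal.tsum_mul_left]
        gcongr
        exact measure_le_tsum_measure_stoppingSet hfin σ h0
    _ = ∑' R, (∑' Q, if R ≤ Q then lam Q * ancestorSum lam Q ^ (r - 1) else 0) *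
          σ (stoppingSet lam R) := by
        rw [ENNReal.tsum_comm]
        simp_rw [← ENNReal.tsum_mul_right, ite_mul, zero_mul]
    _ ≤ ∑' R, (ENNReal.ofReal r)⁻¹ * ancestorSum lam R ^ r * σ (stoppingSet lam R) := by
        gcongr with R
        exact tsum_mul_rpow_ancestorSum_le hr0 hr1 hfin htop R
    _ = _ := by simp_rw [mul_assoc, ENNReal.tsum_mul_left]

def IsCarleson (σ : Measure (Fin n → ℝ)) (r : ℝ) (ν : DyadicCube n → ℝ≥0∞) : Prop :=
  (∀ Q : DyadicCube n, σ Q.toSet = 0 → ν Q = 0) ∧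
    ∀ P : DyadicCube n, σ P.toSet ≠ 0 →
      (∑' Q : {Q : DyadicCube n // Q.toSet ⊆ P.toSet},
        (ν Q.1 / σ Q.1.toSet) ^ (1 / (1 - r)) * σ Q.1.toSet) ≤ σ P.toSet

theorem IsCarleson.tsum_le {σ : Measure (Fin n → ℝ)} {r : ℝ} {ν : DyadicCube n → ℝ≥0∞}
    (hν : IsCarleson σ r ν) (P : DyadicCube n) :
    ∑' Q, (if Q ≤ P then (ν Q / σ Q.toSet) ^ (1 / (1 - r)) * σ Q.toSet else 0) ≤ σ P.toSet := by
  by_cases hP : σ P.toSet = 0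
  · refine (ENNReal.tsum_eq_zero.2 fun Q => ?_).trans_le zero_le
    split_ifs with h
    · simp [measure_mono_null (toSet_mono h) hP]
    · rfl
  refine (ENNReal.tsum_le_tsum fun Q => ?_).trans
    ((tsum_subtype_eq_tsum_ite (fun Q : DyadicCube n => Q.toSet ⊆ P.toSet)
      fun Q => (ν Q / σ Q.toSet) ^ (1 / (1 - r)) * σ Q.toSet).symm.trans_le (hν.2 P hP))
  split_ifs with h h'
  exacts [le_rfl, absurd (toSet_mono h) h', zero_le, le_rfl]

theorem tsum_carleson_mul_rpow_ancestorSum_le {σ : Measure (Fin n → ℝ)} {r : ℝ} (hr0 : 0 < r)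
    (hr1 : r < 1) (hfin : (Function.support lam).Finite) (htop : ∀ Q, lam Q ≠ ⊤)
    {ν : DyadicCube n → ℝ≥0∞} (hν : IsCarleson σ r ν) :
    ∑' Q, (ν Q / σ Q.toSet) ^ (1 / (1 - r)) * σ Q.toSet * ancestorSum lam Q ^ r ≤
      ∑' Q, lam Q * ancestorSum lam Q ^ (r - 1) * σ Q.toSet := by
  set c := fun Q : DyadicCube n => (ν Q / σ Q.toSet) ^ (1 / (1 - r)) * σ Q.toSet
  calc ∑' Q, c Q * ancestorSum lam Q ^ r
      = ∑' Q, ∑' P, if Q ≤ P then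
          c Q * (ancestorSum lam P ^ r - strictAncestorSum lam P ^ r) else 0 := by
        refine tsum_congr fun Q => ?_
        rw [rpow_ancestorSum_eq_tsum hr0 hfin, ← ENNReal.tsum_mul_left]
        exact tsum_congr fun P => by split_ifs <;> simp
    _ = ∑' P, (∑' Q, if Q ≤ P then c Q else 0) *
          (ancestorSum lam P ^ r - strictAncestorSum lam P ^ r) := by
        rw [ENNReal.tsum_comm]
        simp_rw [← ENNReal.tsum_mul_right, ite_mul, zero_mul]
    _ ≤ ∑' P, σ P.toSet * (lam P * ancestorSum lam P ^ (r - 1)) := by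
        gcongr with P
        · exact hν.tsum_le P
        · rw [← strictAncestorSum_add]
          exact ENNReal.add_rpow_sub_rpow_le hr0.le hr1.le
            (strictAncestorSum_ne_top hfin htop P) (htop P)
    _ = _ := tsum_congr fun P => by ring

theorem rpow_mul_le_of_isCarleson {σ : Measure (Fin n → ℝ)} [IsLocallyFiniteMeasure σ] {r : ℝ}
    (hr0 : 0 < r) (hr1 : r < 1) (hfin : (Function.support lam).Finite) (htop : ∀ Q, lam Q ≠ ⊤)
    {ν : DyadicCube n → ℝ≥0∞} (hν : IsCarleson σ r ν) (Q : DyadicCube n) :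
    lam Q ^ r * ν Q ≤ lam Q * ancestorSum lam Q ^ (r - 1) * σ Q.toSet +
      (ν Q / σ Q.toSet) ^ (1 / (1 - r)) * σ Q.toSet * ancestorSum lam Q ^ r := by
  by_cases hσ : σ Q.toSet = 0
  · simp [hν.1 Q hσ]
  by_cases hΛ : ancestorSum lam Q = 0
  · simp [le_zero_iff.1 (hΛ ▸ le_ancestorSum Q), ENNReal.zero_rpow_of_pos hr0]
  calc lam Q ^ r * ν Q = lam Q ^ r * (ν Q / σ Q.toSet) * σ Q.toSet := by
        rw [mul_assoc, ENNReal.div_mul_cancel hσ (measure_toSet_ne_top σ Q)]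
    _ ≤ (lam Q * ancestorSum lam Q ^ (r - 1) +
          (ν Q / σ Q.toSet) ^ (1 / (1 - r)) * ancestorSum lam Q ^ r) * σ Q.toSet := by
        gcongr
        exact ENNReal.rpow_mul_le_mul_rpow_add_rpow_mul hr0 hr1 hΛ
          (ancestorSum_ne_top hfin htop Q) _ _
    _ = _ := by ring

theorem tsum_rpow_mul_le_of_isCarleson {σ : Measure (Fin n → ℝ)} [IsLocallyFiniteMeasure σ]
    {r : ℝ} (hr0 : 0 < r) (hr1 : r < 1) (hfin : (Function.support lam).Finite)
    (htop : ∀ Q, lam Q ≠ ⊤) {ν : DyadicCube n → ℝ≥0∞} (hν : IsCarleson σ r ν) :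
    ∑' Q, lam Q ^ r * ν Q ≤ 2 * (ENNReal.ofReal r)⁻¹ * ∫⁻ x, dSum lam x ^ r ∂σ := by
  calc ∑' Q, lam Q ^ r * ν Q
      ≤ ∑' Q, lam Q * ancestorSum lam Q ^ (r - 1) * σ Q.toSet +
          ∑' Q, (ν Q / σ Q.toSet) ^ (1 / (1 - r)) * σ Q.toSet * ancestorSum lam Q ^ r :=
        (ENNReal.tsum_le_tsum (rpow_mul_le_of_isCarleson hr0 hr1 hfin htop hν)).trans_eq
          ENNReal.tsum_add
    _ ≤ 2 * ∑' Q, lam Q * ancestorSum lam Q ^ (r - 1) * σ Q.toSet := by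
        rw [two_mul]
        exact add_le_add_right (tsum_carleson_mul_rpow_ancestorSum_le hr0 hr1 hfin htop hν) _
    _ ≤ 2 * (ENNReal.ofReal r)⁻¹ * ∫⁻ x, dSum lam x ^ r ∂σ := by
        rw [mul_assoc, lintegral_rpow_dSum hr0 hfin]
        gcongr
        exact tsum_mul_rpow_ancestorSum_mul_measure_le hr0 hr1 hfin htop σ

noncomputable def extremalSeq (σ : Measure (Fin n → ℝ)) (r : ℝ) (lam : DyadicCube n → ℝ≥0∞)
    (Q : DyadicCube n) : ℝ≥0∞ :=
  lam Q ^ (1 - r) *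
    ∑' R, if R ≤ Q then ancestorSum lam R ^ (r - 1) * σ (stoppingSet lam R) else 0

theorem tsum_rpow_mul_extremalSeq {r : ℝ} (hr0 : 0 < r) (hfin : (Function.support lam).Finite)
    (htop : ∀ Q, lam Q ≠ ⊤) (σ : Measure (Fin n → ℝ)) :
    ∑' Q, lam Q ^ r * extremalSeq σ r lam Q =
      ∑' R, ancestorSum lam R ^ r * σ (stoppingSet lam R) := by
  calc ∑' Q, lam Q ^ r * extremalSeq σ r lam Q
      = ∑' Q, ∑' R, if R ≤ Q then
          lam Q * (ancestorSum lam R ^ (r - 1) * σ (stoppingSet lam R)) else 0 := by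
        refine tsum_congr fun Q => ?_
        rw [extremalSeq, ← mul_assoc, ← ENNReal.rpow_add_of_add_pos (htop Q) _ _ (by simp),
          add_sub_cancel, ENNReal.rpow_one, ← ENNReal.tsum_mul_left]
        simp_rw [mul_ite, mul_zero]
    _ = ∑' R, ancestorSum lam R * (ancestorSum lam R ^ (r - 1) * σ (stoppingSet lam R)) := by
        rw [ENNReal.tsum_comm]
        simp_rw [ancestorSum, ← ENNReal.tsum_mul_right, ite_mul, zero_mul]
    _ = _ := by
        refine tsum_congr fun R => ?_
        rw [← mul_assoc]
        congr 1
        simpa using (ENNReal.rpow_add_of_add_pos (ancestorSum_ne_top hfin htop R) 1 (r - 1)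
          (by linarith)).symm

theorem tsum_rpow_sub_one_mul_measure_le {r : ℝ} (hr0 : 0 < r) (hr1 : r < 1)
    (σ : Measure (Fin n → ℝ)) [IsLocallyFiniteMeasure σ] (Q : DyadicCube n) :
    ∑' R, (if R ≤ Q then ancestorSum lam R ^ (r - 1) * σ (stoppingSet lam R) else 0) ≤
      (∑' R, if R ≤ Q then (ancestorSum lam R)⁻¹ * σ (stoppingSet lam R) else 0) ^ (1 - r) *
        σ Q.toSet ^ r := by
  have hr1' : 0 < 1 - r := sub_pos.2 hr1
  have hterm (R : DyadicCube n) :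
      (if R ≤ Q then ancestorSum lam R ^ (r - 1) * σ (stoppingSet lam R) else 0) =
        (if R ≤ Q then (ancestorSum lam R)⁻¹ * σ (stoppingSet lam R) else 0) ^ (1 - r) *
          (if R ≤ Q then σ (stoppingSet lam R) else 0) ^ (1 - (1 - r)) := by
    rw [sub_sub_cancel]
    split_ifs
    · have he : σ (stoppingSet lam R) ≠ ⊤ := ne_top_of_le_ne_top (measure_toSet_ne_top σ R)
        (measure_mono (stoppingSet_subset R))
      rw [ENNReal.mul_rpow_of_nonneg _ _ hr1'.le, ENNReal.inv_rpow, mul_assoc,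
        ← ENNReal.rpow_add_of_add_pos he _ _ (by simp), sub_add_cancel, ENNReal.rpow_one,
        ← ENNReal.rpow_neg, neg_sub]
    · simp [ENNReal.zero_rpow_of_pos hr1']
  rw [tsum_congr hterm]
  refine (ENNReal.tsum_rpow_mul_rpow_le hr1' (by linarith) _ _).trans ?_
  rw [sub_sub_cancel]
  gcongr
  exact tsum_measure_stoppingSet_le σ (· ≤ Q) fun _ => toSet_mono

theorem extremalSeq_div_rpow_mul_le {r : ℝ} (hr0 : 0 < r) (hr1 : r < 1)
    (σ : Measure (Fin n → ℝ)) [IsLocallyFiniteMeasure σ] (Q : DyadicCube n) :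
    (extremalSeq σ r lam Q / σ Q.toSet) ^ (1 / (1 - r)) * σ Q.toSet ≤
      lam Q * ∑' R, if R ≤ Q then (ancestorSum lam R)⁻¹ * σ (stoppingSet lam R) else 0 := by
  set U := ∑' R, if R ≤ Q then (ancestorSum lam R)⁻¹ * σ (stoppingSet lam R) else 0
  have hr1' : 0 < 1 - r := sub_pos.2 hr1
  by_cases hσ : σ Q.toSet = 0
  · simp [hσ]
  have hσtop := measure_toSet_ne_top σ Q
  have hbound : extremalSeq σ r lam Q / σ Q.toSet ≤ (lam Q * U * (σ Q.toSet)⁻¹) ^ (1 - r) :=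
    calc extremalSeq σ r lam Q / σ Q.toSet
        ≤ lam Q ^ (1 - r) * (U ^ (1 - r) * σ Q.toSet ^ r) * (σ Q.toSet)⁻¹ := by
          rw [extremalSeq, div_eq_mul_inv]
          gcongr
          exact tsum_rpow_sub_one_mul_measure_le hr0 hr1 σ Q
      _ = _ := by
          rw [ENNReal.mul_rpow_of_nonneg _ _ hr1'.le, ENNReal.mul_rpow_of_nonneg _ _ hr1'.le,
            ENNReal.inv_rpow, ← ENNReal.rpow_neg, neg_sub, ENNReal.rpow_sub _ _ hσ hσtop,
            ENNReal.rpow_one, div_eq_mul_inv]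
          ring
  calc _ ≤ ((lam Q * U * (σ Q.toSet)⁻¹) ^ (1 - r)) ^ (1 / (1 - r)) * σ Q.toSet := by
        gcongr
    _ = lam Q * U := by
        rw [one_div, ENNReal.rpow_rpow_inv hr1'.ne', mul_assoc, ENNReal.inv_mul_cancel hσ hσtop,
          mul_one]

theorem isCarleson_extremalSeq {r : ℝ} (hr0 : 0 < r) (hr1 : r < 1)
    (σ : Measure (Fin n → ℝ)) [IsLocallyFiniteMeasure σ]
    (hnull : ∀ Q : DyadicCube n, σ Q.toSet = 0 → lam Q = 0) :
    IsCarleson σ r (extremalSeq σ r lam) := by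
  refine ⟨fun Q hQ => by simp [extremalSeq, hnull Q hQ, ENNReal.zero_rpow_of_pos (sub_pos.2 hr1)],
    fun P _ => ?_⟩
  rw [tsum_subtype_eq_tsum_ite (fun Q : DyadicCube n => Q.toSet ⊆ P.toSet)
    fun Q => (extremalSeq σ r lam Q / σ Q.toSet) ^ (1 / (1 - r)) * σ Q.toSet]
  calc _ ≤ ∑' Q, ∑' R, if Q.toSet ⊆ P.toSet ∧ R ≤ Q then
          lam Q * ((ancestorSum lam R)⁻¹ * σ (stoppingSet lam R)) else 0 := by
        refine ENNReal.tsum_le_tsum fun Q => ?_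
        split_ifs with hQ
        · refine (extremalSeq_div_rpow_mul_le hr0 hr1 σ Q).trans_eq ?_
          rw [← ENNReal.tsum_mul_left]
          exact tsum_congr fun R => by simp [hQ]
        · exact zero_le
    _ = ∑' R, (∑' Q, if Q.toSet ⊆ P.toSet ∧ R ≤ Q then lam Q else 0) *
          ((ancestorSum lam R)⁻¹ * σ (stoppingSet lam R)) := by
        rw [ENNReal.tsum_comm]
        simp_rw [← ENNReal.tsum_mul_right, ite_mul, zero_mul]
    _ ≤ ∑' R, if R.toSet ⊆ P.toSet then σ (stoppingSet lam R) else 0 := by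
        refine ENNReal.tsum_le_tsum fun R => ?_
        split_ifs with hR
        · have hinner : (∑' Q, if Q.toSet ⊆ P.toSet ∧ R ≤ Q then lam Q else 0) ≤
              ancestorSum lam R :=
            ENNReal.tsum_le_tsum fun Q => by split_ifs <;> simp_all
          rw [← mul_assoc, ← div_eq_mul_inv]
          exact mul_le_of_le_one_left zero_le (ENNReal.div_le_of_le_mul (by rwa [one_mul]))
        · rw [ENNReal.tsum_eq_zero.2 fun Q => if_neg fun h => hR ((toSet_mono h.2).trans h.1),
            zero_mul]
    _ ≤ σ P.toSet := tsum_measure_stoppingSet_le σ _ fun _ => id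

end DyadicCube

/-- Duality Lemma 3.1: for `0 < r < 1`,
`a₁(Λ) = ∫ (Σ_Q λ_Q χ_Q)^r dσ` is equivalent to
`a₃(Λ) = sup { Σ_R λ_R^r ν_R : ν Carleson, Σ_{Q⊆P} (ν_Q/σ(Q))^{1/(1-r)} σ(Q) ≤ σ(P) }`,
with constants depending only on `r`. -/
theorem a1_equiv_a3_duality (r : ℝ) (hr0 : 0 < r) (hr1 : r < 1) :
    ∃ C : ℝ≥0∞, 0 < C ∧ C ≠ ⊤ ∧
      ∀ (n : ℕ) (σ : Measure (Fin n → ℝ)) [IsLocallyFiniteMeasure σ]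
        (lam : DyadicCube n → ℝ≥0∞),
        (Function.support lam).Finite → (∀ Q, lam Q ≠ ⊤) →
        (∀ Q : DyadicCube n, σ Q.toSet = 0 → lam Q = 0) →
        C⁻¹ * (⨆ ν : {ν : DyadicCube n → ℝ≥0∞ //
                (∀ Q : DyadicCube n, σ Q.toSet = 0 → ν Q = 0) ∧
                ∀ P : DyadicCube n, σ P.toSet ≠ 0 →
                  (∑' Q : {Q : DyadicCube n // Q.toSet ⊆ P.toSet},
                      (ν Q.1 / σ Q.1.toSet) ^ (1 / (1 - r)) * σ Q.1.toSet)
                    ≤ σ P.toSet},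
              ∑' R : DyadicCube n, (lam R) ^ r * ν.1 R)
            ≤ ∫⁻ x, (dSum lam x) ^ r ∂σ
        ∧ (∫⁻ x, (dSum lam x) ^ r ∂σ)
            ≤ C * ⨆ ν : {ν : DyadicCube n → ℝ≥0∞ //
                (∀ Q : DyadicCube n, σ Q.toSet = 0 → ν Q = 0) ∧
                ∀ P : DyadicCube n, σ P.toSet ≠ 0 →
                  (∑' Q : {Q : DyadicCube n // Q.toSet ⊆ P.toSet},
                      (ν Q.1 / σ Q.1.toSet) ^ (1 / (1 - r)) * σ Q.1.toSet)
                    ≤ σ P.toSet},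
              ∑' R : DyadicCube n, (lam R) ^ r * ν.1 R := by
  have hr : ENNReal.ofReal r ≠ 0 := by simpa using hr0
  have hC0 : 2 * (ENNReal.ofReal r)⁻¹ ≠ 0 := by simp
  have hCtop : 2 * (ENNReal.ofReal r)⁻¹ ≠ ⊤ :=
    ENNReal.mul_ne_top ENNReal.ofNat_ne_top (ENNReal.inv_ne_top.2 hr)
  have hC1 : 1 ≤ 2 * (ENNReal.ofReal r)⁻¹ :=
    one_le_two.trans (le_mul_of_one_le_right zero_le
      (ENNReal.one_le_inv.2 (ENNReal.ofReal_le_one.2 hr1.le)))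
  refine ⟨_, pos_iff_ne_zero.2 hC0, hCtop, fun n σ _ lam hfin htop hnull => ⟨?_, ?_⟩⟩
  · rw [ENNReal.inv_mul_le_iff hC0 hCtop]
    exact iSup_le fun ν => DyadicCube.tsum_rpow_mul_le_of_isCarleson hr0 hr1 hfin htop ν.2
  · refine le_trans ?_ (le_mul_of_one_le_left zero_le hC1)
    rw [DyadicCube.lintegral_rpow_dSum hr0 hfin,
      ← DyadicCube.tsum_rpow_mul_extremalSeq hr0 hfin htop σ]
    exact le_iSup_of_le ⟨_, DyadicCube.isCarleson_extremalSeq hr0 hr1 σ hnull⟩ le_rfl
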